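/- Let n be an odd positive integer and let d be a divisor of n with 1 < d < n. Let ν_1, …, ν_d be integers such that for every divisor c of n with c ≠ 1, the multiset of ∼_{n/c}-classes of (ν_1, …, ν_d) equals the multiset of ∼_{n/c}-classes of (1, 2, …, d). Then for every b ∈ 𝔹_n one has |Σ_{i=1}^{d} (κ_{ν_i} · μ(γ_n(ν_i)) · δ^{(n/γ_n(ν_i))}_{b,ν_i} − μ(γ_n(i)) · δ^{(n/γ_n(i))}_{b,i})| ≤ 1 + 2^{P(d)+2}, where P(d) is the number of distinct prime divisors of d. -/

import Mathlib

/-- `nPart n p = p^{v_p(n)}`, the `p`-part of `n`. -/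
def nPart (n p : ℕ) : ℕ := p ^ (n.factorization p)

/-- The representative of `x` modulo `m` lying in the interval `(-m/2, m/2]`. -/
def midRep (x : ℤ) (m : ℕ) : ℤ :=
  if 2 * (x % (m : ℤ)) ≤ (m : ℤ) then x % (m : ℤ) else x % (m : ℤ) - (m : ℤ)

/-- `|x|_m`, the absolute value of the representative of `x` modulo `m` in
`(-m/2, m/2]`. -/
def absRep (x : ℤ) (m : ℕ) : ℤ := |midRep x m|

/-- `γ_n(x)`, the product of the primes `p` dividing `n` with
`|x|_{n_p} < n_p/(2p)`. -/
def gammaFn (n : ℕ) (x : ℤ) : ℕ :=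
  ∏ p ∈ n.primeFactors,
    if 2 * (p : ℤ) * absRep x (nPart n p) < (nPart n p : ℤ) then p else 1

/-- The predicate describing membership in `𝔹_n ⊆ ℤ/nℤ`:
`|x|_{n_p} > n_p/(2p)` for every prime `p` dividing `n`. -/
def inBB (n : ℕ) (b : ZMod n) : Prop :=
  ∀ p ∈ n.primeFactors, (nPart n p : ℤ) < 2 * (p : ℤ) * absRep (b.val : ℤ) (nPart n p)


/-- `𝔹_n` realized as the finset of representatives `b ∈ {0, …, n−1}` with
`|b|_{n_p} > n_p/(2p)` for every prime `p` dividing `n`. -/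
def BBFinset (n : ℕ) : Finset ℕ :=
  (Finset.range n).filter
    (fun b => ∀ p ∈ n.primeFactors,
      (nPart n p : ℤ) < 2 * (p : ℤ) * absRep (b : ℤ) (nPart n p))

/-- `δ^{(m)}_{x,y} = 1` if `x ≡ ±y (mod m)` and `0` otherwise. -/
def deltaSim (m : ℕ) (x y : ℤ) : ℤ :=
  if x ≡ y [ZMOD m] ∨ x ≡ -y [ZMOD m] then 1 else 0

open Finset

/-!
Pick a prime `p ∣ n / d` and pair `ν (σ i)` with `i + 1`, where `σ` matches the classes
modulo `n / p`. The `i`-th paired difference vanishes unless `b ≡ ±(i + 1)` modulo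
`q ^ (v_q(n) - 1)` at every prime `q ∣ d`, and even modulo `q ^ v_q(n)` when `q ≠ p` and
`i + 1` is not small at `q`. For a fixed sign and a fixed set of small primes these congruences
determine `i + 1` modulo `d`, so at most `2 · 2 ^ P(d)` differences survive. Each is at most `2`
in absolute value, apart from the one index with `n ∣ ν (σ i)`, which adds at most `1`.
-/

lemma midRep_modEq (x : ℤ) (m : ℕ) : midRep x m ≡ x [ZMOD m] := by
  unfold midRep
  split_ifs <;> simp [Int.ModEq]

lemma absRep_congr {x y : ℤ} {m : ℕ} (h : x ≡ y [ZMOD m]) : absRep x m = absRep y m := by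
  unfold absRep midRep
  rw [h.eq]

lemma absRep_neg {m : ℕ} (hm : Odd m) (x : ℤ) : absRep (-x) m = absRep x m := by
  obtain ⟨k, rfl⟩ := hm
  have hm0 : (0 : ℤ) < ((2 * k + 1 : ℕ) : ℤ) := by positivity
  have hr := Int.emod_nonneg x hm0.ne'
  have hr' := Int.emod_lt_of_pos x hm0
  have hs := Int.emod_nonneg (-x) hm0.ne'
  have hs' := Int.emod_lt_of_pos (-x) hm0
  obtain ⟨c, hc⟩ : ((2 * k + 1 : ℕ) : ℤ) ∣ x % _ + (-x) % _ := by
    rw [Int.dvd_iff_emod_eq_zero, ← Int.add_emod, add_neg_cancel, Int.zero_emod]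
  have hc' : c = 0 ∨ c = 1 := by
    have : 0 ≤ c := by nlinarith
    have : c < 2 := by nlinarith
    omega
  unfold absRep midRep
  rw [abs_eq_abs]
  push_cast at *
  rcases hc' with rfl | rfl <;> split_ifs <;> omega

def IsSmallAt (n q : ℕ) (x : ℤ) : Prop :=
  2 * (q : ℤ) * absRep x (nPart n q) < nPart n q

instance (n q : ℕ) (x : ℤ) : Decidable (IsSmallAt n q x) :=
  inferInstanceAs (Decidable (_ < _))

lemma isSmallAt_congr {n q : ℕ} {x y : ℤ} (h : x ≡ y [ZMOD nPart n q]) :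
    IsSmallAt n q x ↔ IsSmallAt n q y := by
  unfold IsSmallAt
  rw [absRep_congr h]

lemma gammaFn_eq_prod_filter (n : ℕ) (x : ℤ) :
    gammaFn n x = ∏ p ∈ n.primeFactors with IsSmallAt n p x, p :=
  (prod_filter _ _).symm

lemma gammaFn_dvd (n : ℕ) (x : ℤ) : gammaFn n x ∣ n := by
  rw [gammaFn_eq_prod_filter]
  exact (prod_dvd_prod_of_subset _ _ _ (filter_subset _ _)).trans n.prod_primeFactors_dvd

lemma Nat.factorization_prod_primes {s : Finset ℕ} (hs : ∀ p ∈ s, p.Prime) (q : ℕ) :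
    (∏ p ∈ s, p).factorization q = if q ∈ s then 1 else 0 := by
  rw [Nat.factorization_prod fun p hp => (hs p hp).ne_zero, Finsupp.finsetSum_apply,
    sum_congr rfl fun p hp => by rw [(hs p hp).factorization, Finsupp.single_apply]]
  simp

lemma factorization_gammaFn (n q : ℕ) (x : ℤ) :
    (gammaFn n x).factorization q = if q ∈ n.primeFactors ∧ IsSmallAt n q x then 1 else 0 := by
  rw [gammaFn_eq_prod_filter, Nat.factorization_prod_primes fun p hp =>
    Nat.prime_of_mem_primeFactors (mem_filter.mp hp).1]
  simp only [mem_filter]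

lemma gammaFn_neg {n : ℕ} (hn : Odd n) (x : ℤ) : gammaFn n (-x) = gammaFn n x := by
  unfold gammaFn
  refine prod_congr rfl fun p _ => ?_
  rw [absRep_neg (hn.of_dvd_nat (Nat.ordProj_dvd n p) : Odd (nPart n p))]

lemma Nat.pow_sub_factorization_dvd_div {g n : ℕ} (h : g ∣ n) (q : ℕ) :
    q ^ (n.factorization q - g.factorization q) ∣ n / g := by
  simpa [Nat.factorization_div h] using Nat.ordProj_dvd (n / g) q

lemma Int.natCast_dvd_of_forall_ordProj_dvd {d : ℕ} (hd : d ≠ 0) {z : ℤ}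
    (h : ∀ q ∈ d.primeFactors, ((q ^ d.factorization q : ℕ) : ℤ) ∣ z) : (d : ℤ) ∣ z := by
  rcases eq_or_ne z 0 with rfl | hz
  · exact dvd_zero _
  rw [Int.natCast_dvd, ← Nat.factorization_le_iff_dvd hd (Int.natAbs_ne_zero.mpr hz)]
  intro q
  by_cases hq : q ∈ d.primeFactors
  · exact ((Nat.prime_of_mem_primeFactors hq).pow_dvd_iff_le_factorization
      (Int.natAbs_ne_zero.mpr hz)).mp (Int.natCast_dvd.mp (h q hq))
  · rw [← Nat.support_factorization, Finsupp.notMem_support_iff] at hq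
    simp [hq]

lemma Int.ModEq.of_absRep_lt {x y : ℤ} {k M N : ℕ} (hN : N = k * M)
    (hx : 2 * k * absRep x N < N) (hy : 2 * k * absRep y N < N) (h : x ≡ y [ZMOD M]) :
    x ≡ y [ZMOD N] := by
  subst hN
  have hk : 0 < k := Nat.pos_of_ne_zero fun hk => by simp [hk] at hx
  have hMN : (M : ℤ) ∣ (k * M : ℕ) := ⟨k, by push_cast; ring⟩
  have small {z : ℤ} (hz : 2 * k * absRep z (k * M) < (k * M : ℕ)) :
      2 * |midRep z (k * M)| < M := by
    refine lt_of_mul_lt_mul_left ?_ (Nat.cast_nonneg k)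
    push_cast at hz; unfold absRep at hz; linarith
  have hrs : midRep x (k * M) = midRep y (k * M) := by
    have hdvd : (M : ℤ) ∣ midRep x (k * M) - midRep y (k * M) :=
      (((midRep_modEq x (k * M)).of_dvd hMN).trans
        (h.trans ((midRep_modEq y (k * M)).of_dvd hMN).symm)).dvd |> (dvd_sub_comm).mp
    refine sub_eq_zero.mp (Int.eq_zero_of_abs_lt_dvd hdvd ?_)
    linarith [small hx, small hy, abs_sub (midRep x (k * M)) (midRep y (k * M))]
  exact (midRep_modEq x (k * M)).symm.trans (hrs ▸ midRep_modEq y (k * M))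

/-- What `b ≡ ±x [ZMOD n / γ(x)]` and `x ≡ ±j [ZMOD n / p]` leave of `±b ≡ j` at a prime `q ∣ d`:
one power of `q` is lost when `q = p` or when `j` is small at `q`. -/
def LocalCongr (n d p : ℕ) (c j : ℤ) : Prop :=
  ∀ q ∈ d.primeFactors,
    c ≡ j [ZMOD (q ^ (n.factorization q - if q = p ∨ IsSmallAt n q j then 1 else 0) : ℕ)]

instance (n d p : ℕ) (c j : ℤ) : Decidable (LocalCongr n d p c j) := by
  unfold LocalCongr; infer_instance

lemma localCongr_of_modEq {n d p : ℕ} (hp : p.Prime) (hpn : p ∣ n) {c x j : ℤ}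
    (hc : c ≡ x [ZMOD (n / gammaFn n x : ℕ)]) (hx : x ≡ j [ZMOD (n / p : ℕ)]) :
    LocalCongr n d p c j := by
  intro q _
  have dvd_div {g e : ℕ} (hg : g ∣ n) (hle : g.factorization q ≤ e) :
      ((q ^ (n.factorization q - e) : ℕ) : ℤ) ∣ (n / g : ℕ) :=
    Int.natCast_dvd_natCast.mpr
      ((Nat.pow_dvd_pow q (by omega)).trans (Nat.pow_sub_factorization_dvd_div hg q))
  have hp_fac : p.factorization q = if q = p then 1 else 0 := by
    rw [hp.factorization, Finsupp.single_apply]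
    simp only [eq_comm]
  have hp_le : p.factorization q ≤ if q = p ∨ IsSmallAt n q j then 1 else 0 := by
    rw [hp_fac]
    split_ifs <;> simp_all
  have hγ_le : (gammaFn n x).factorization q ≤ if q = p ∨ IsSmallAt n q j then 1 else 0 := by
    rw [factorization_gammaFn]
    split_ifs with hsmall hj <;> try simp
    push Not at hj
    have hxj : x ≡ j [ZMOD nPart n q] :=
      hx.of_dvd (by simpa [nPart] using dvd_div (e := 0) hpn (by simp [hp_fac, hj.1]))
    exact hj.2 ((isSmallAt_congr hxj).mp hsmall.2)
  exact (hc.of_dvd (dvd_div (gammaFn_dvd n x) hγ_le)).trans (hx.of_dvd (dvd_div hpn hp_le))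

lemma dvd_sub_of_localCongr {n d p : ℕ} (hn : n ≠ 0) (hp : p.Prime) (hdp : d * p ∣ n)
    {c j j' : ℤ} (hj : LocalCongr n d p c j) (hj' : LocalCongr n d p c j')
    (hsmall : ∀ q ∈ d.primeFactors, IsSmallAt n q j ↔ IsSmallAt n q j') : (d : ℤ) ∣ j - j' := by
  have hd : d ≠ 0 := by rintro rfl; simp_all
  have hdn : d.factorization ≤ n.factorization :=
    (Nat.factorization_le_iff_dvd hd hn).mpr (dvd_of_mul_right_dvd hdp)
  refine Int.natCast_dvd_of_forall_ordProj_dvd hd fun q hq => ?_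
  have hq_prime := Nat.prime_of_mem_primeFactors hq
  have hjj := (hj q hq).symm.trans (by simpa only [← hsmall q hq] using hj' q hq)
  refine Int.modEq_iff_dvd.mp (Int.ModEq.symm ?_)
  by_cases hqp : q = p
  · subst hqp
    have hdpn : d.factorization q + 1 ≤ n.factorization q := by
      simpa [Nat.factorization_mul hd hp.ne_zero, hp.factorization] using
        (Nat.factorization_le_iff_dvd (mul_ne_zero hd hp.ne_zero) hn).mpr hdp q
    simp only [true_or, if_true] at hjj
    exact hjj.of_dvd (Int.natCast_dvd_natCast.mpr (Nat.pow_dvd_pow q (by omega)))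
  have hv : n.factorization q ≠ 0 :=
    ((hq_prime.factorization_pos_of_dvd hd (Nat.dvd_of_mem_primeFactors hq)).trans_le
      (hdn q)).ne'
  by_cases hs : IsSmallAt n q j
  · simp only [hs, or_true, if_true] at hjj
    have hlift := Int.ModEq.of_absRep_lt (mul_pow_sub_one hv q).symm hs ((hsmall q hq).mp hs) hjj
    exact hlift.of_dvd (Int.natCast_dvd_natCast.mpr (Nat.pow_dvd_pow q (hdn q)))
  · simp only [hqp, hs, or_false, if_false, Nat.sub_zero] at hjj
    exact hjj.of_dvd (Int.natCast_dvd_natCast.mpr (Nat.pow_dvd_pow q (hdn q)))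

lemma card_localCongr_le {n d p : ℕ} (hn : n ≠ 0) (hp : p.Prime) (hdp : d * p ∣ n) (c : ℤ) :
    #{i : Fin d | LocalCongr n d p c (i + 1)} ≤ 2 ^ #d.primeFactors := by
  refine (card_le_card_of_injOn (fun i : Fin d => {q ∈ d.primeFactors | IsSmallAt n q (i + 1)})
    (fun i _ => mem_powerset.mpr (filter_subset _ _)) fun i hi i' hi' heq => ?_).trans_eq
    (card_powerset _)
  have hdvd := dvd_sub_of_localCongr hn hp hdp (mem_filter.mp hi).2 (mem_filter.mp hi').2
    fun q hq => by simpa [hq] using congr(q ∈ $heq)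
  have hlt : |((i : ℤ) + 1) - (i' + 1)| < d := by
    rw [abs_lt]; constructor <;> omega
  exact Fin.ext (by have := Int.eq_zero_of_abs_lt_dvd hdvd hlt; omega)

lemma localCongr_of_deltaSim_ne_zero {n d p : ℕ} (hn : Odd n) (hp : p.Prime) (hpn : p ∣ n)
    {b x j : ℤ} (hδ : deltaSim (n / gammaFn n x) b x ≠ 0)
    (hx : x ≡ j [ZMOD (n / p : ℕ)] ∨ x ≡ -j [ZMOD (n / p : ℕ)]) :
    LocalCongr n d p b j ∨ LocalCongr n d p (-b) j := by
  have hbx : b ≡ x [ZMOD (n / gammaFn n x : ℕ)] ∨ b ≡ -x [ZMOD (n / gammaFn n x : ℕ)] := by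
    by_contra h
    exact hδ (if_neg h)
  rcases hbx with hbx | hbx <;> rcases hx with hxj | hxj
  · exact .inl (localCongr_of_modEq hp hpn hbx hxj)
  · exact .inr (localCongr_of_modEq hp hpn (x := -x) (by rw [gammaFn_neg hn]; exact hbx.neg)
      (by simpa using hxj.neg))
  · exact .inr (localCongr_of_modEq hp hpn (by simpa using hbx.neg) hxj)
  · exact .inl (localCongr_of_modEq hp hpn (x := -x) (by rw [gammaFn_neg hn]; exact hbx)
      (by simpa using hxj.neg))

lemma abs_moebius_mul_deltaSim_le_one (k m : ℕ) (x y : ℤ) :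
    |(ArithmeticFunction.moebius k : ℤ) * deltaSim m x y| ≤ 1 := by
  rw [abs_mul]
  refine mul_le_one₀ (ArithmeticFunction.abs_moebius_le_one) (abs_nonneg _) ?_
  unfold deltaSim
  split_ifs <;> simp

lemma abs_term_sub_le {n d p : ℕ} (hn : Odd n) (hp : p.Prime) (hpn : p ∣ n) (b x j : ℤ)
    (hx : x ≡ j [ZMOD (n / p : ℕ)] ∨ x ≡ -j [ZMOD (n / p : ℕ)]) :
    |(if (n : ℤ) ∣ x then 2 else 1) * (ArithmeticFunction.moebius (gammaFn n x) : ℤ) *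
          deltaSim (n / gammaFn n x) b x -
        (ArithmeticFunction.moebius (gammaFn n j) : ℤ) * deltaSim (n / gammaFn n j) b j| ≤
      2 * ((if LocalCongr n d p b j then 1 else 0) + (if LocalCongr n d p (-b) j then 1 else 0)) +
        (if (n : ℤ) ∣ x then 1 else 0) := by
  by_cases hW : LocalCongr n d p b j ∨ LocalCongr n d p (-b) j
  · have hu := abs_moebius_mul_deltaSim_le_one (gammaFn n x) (n / gammaFn n x) b x
    have hv := abs_moebius_mul_deltaSim_le_one (gammaFn n j) (n / gammaFn n j) b j
    have hW' : 1 ≤ (if LocalCongr n d p b j then 1 else 0) +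
        (if LocalCongr n d p (-b) j then (1 : ℤ) else 0) := by
      split_ifs <;> simp_all
    rw [mul_assoc]
    refine (abs_sub _ _).trans ?_
    rw [abs_mul]
    split_ifs at hW' ⊢ <;> simp only [abs_two, abs_one] <;> linarith
  · have hδx : deltaSim (n / gammaFn n x) b x = 0 := by
      by_contra h
      exact hW (localCongr_of_deltaSim_ne_zero hn hp hpn h hx)
    have hδj : deltaSim (n / gammaFn n j) b j = 0 := by
      by_contra h
      exact hW (localCongr_of_deltaSim_ne_zero hn hp hpn h (.inl rfl))
    rw [hδx, hδj]
    split_ifs <;> simp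

lemma card_filter_dvd_le_one {d m : ℕ} (hdm : d ≤ m) (f : Fin d → ℤ)
    (hf : ∀ i : Fin d, f i ≡ i + 1 [ZMOD m] ∨ f i ≡ -(i + 1) [ZMOD m]) {N : ℤ}
    (hN : (m : ℤ) ∣ N) : #{i | N ∣ f i} ≤ 1 := by
  have eq_of_dvd (i : Fin d) (hi : N ∣ f i) : (i : ℤ) + 1 = m := by
    have hm : (m : ℤ) ∣ (i : ℤ) + 1 := by
      rcases hf i with h | h
      · have := dvd_add h.dvd (hN.trans hi)
        rwa [sub_add_cancel] at this
      · have := dvd_add h.dvd (hN.trans hi)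
        rwa [sub_add_cancel, dvd_neg] at this
    exact le_antisymm (by omega) (Int.le_of_dvd (by omega) hm)
  refine card_le_one.mpr fun i hi i' hi' => Fin.ext ?_
  have := eq_of_dvd i (mem_filter.mp hi).2
  have := eq_of_dvd i' (mem_filter.mp hi').2
  omega

lemma abs_sum_sub_le_of_perm {ι α : Type*} [Fintype ι] [AddCommGroup α] [LinearOrder α]
    [IsOrderedAddMonoid α] (f g h : ι → α) (σ : Equiv.Perm ι)
    (hle : ∀ i, |f (σ i) - g i| ≤ h i) : |∑ i, (f i - g i)| ≤ ∑ i, h i := by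
  rw [sum_sub_distrib, ← Equiv.sum_comp σ f, ← sum_sub_distrib]
  exact (abs_sum_le_sum_abs _ _).trans (sum_le_sum fun i _ => hle i)

theorem bound_difference_general (n : ℕ) (hodd : Odd n) (d : ℕ) (hd : d ∣ n)
    (hdn : d < n)
    (ν : Fin d → ℤ)
    (hperm : ∀ c : ℕ, c ∣ n → c ≠ 1 → ∃ σ : Equiv.Perm (Fin d), ∀ i : Fin d,
      ν (σ i) ≡ ((i : ℤ) + 1) [ZMOD ((n / c : ℕ) : ℕ)] ∨
      ν (σ i) ≡ -((i : ℤ) + 1) [ZMOD ((n / c : ℕ) : ℕ)])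
    (b : ℕ) :
    |∑ i : Fin d,
        ((if (n : ℤ) ∣ ν i then 2 else 1) *
            (ArithmeticFunction.moebius (gammaFn n (ν i)) : ℤ) *
            deltaSim (n / gammaFn n (ν i)) (b : ℤ) (ν i) -
          (ArithmeticFunction.moebius (gammaFn n ((i : ℤ) + 1)) : ℤ) *
            deltaSim (n / gammaFn n ((i : ℤ) + 1)) (b : ℤ) ((i : ℤ) + 1))| ≤
      1 + 2 ^ (d.primeFactors.card + 2) := by
  have hd0 : 0 < d := Nat.pos_of_dvd_of_pos hd (by omega)
  obtain ⟨p, hp, hpd⟩ := Nat.exists_prime_and_dvd fun h : n / d = 1 => by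
    rw [Nat.div_eq_iff_eq_mul_left (by omega) hd, one_mul] at h; omega
  have hdp : d * p ∣ n := Nat.mul_dvd_of_dvd_div hd hpd
  have hpn : p ∣ n := (dvd_mul_left p d).trans hdp
  have hdle : d ≤ n / p := (Nat.le_div_iff_mul_le hp.pos).mpr (Nat.le_of_dvd (by omega) hdp)
  obtain ⟨σ, hσ⟩ := hperm p hpn hp.ne_one
  calc _ ≤ ∑ i : Fin d, ((2 : ℤ) * ((if LocalCongr n d p b (i + 1) then 1 else 0) +
          (if LocalCongr n d p (-b) (i + 1) then 1 else 0)) +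
          (if (n : ℤ) ∣ ν (σ i) then 1 else 0)) :=
        abs_sum_sub_le_of_perm _ _ _ σ fun i => by
          exact abs_term_sub_le hodd hp hpn b (ν (σ i)) ((i : ℤ) + 1) (hσ i)
    _ = 2 * ((#{i : Fin d | LocalCongr n d p b (i + 1)} : ℤ) +
          #{i : Fin d | LocalCongr n d p (-b) (i + 1)}) + #{i | (n : ℤ) ∣ ν (σ i)} := by
        simp only [sum_add_distrib, ← mul_sum, sum_boole]
    _ ≤ 2 * (2 ^ #d.primeFactors + 2 ^ #d.primeFactors) + 1 := by
        gcongr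
        · exact_mod_cast card_localCongr_le (by omega) hp hdp b
        · exact_mod_cast card_localCongr_le (by omega) hp hdp (-b)
        · exact_mod_cast card_filter_dvd_le_one hdle _ hσ
            (Int.natCast_dvd_natCast.mpr (Nat.div_dvd_of_dvd hpn))
    _ = 1 + 2 ^ (#d.primeFactors + 2) := by ring

/-- **Lemma (Bound on coefficient differences).** Let `n` be odd, `1 < d < n` a
divisor of `n`, and `ν_1, …, ν_d` integers whose multiset of `∼_{n/c}`-classes
coincides with that of `(1, …, d)` for every divisor `c ≠ 1` of `n`.  Then for
every `b ∈ 𝔹_n`,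
`|Σ_{i=1}^d (κ_{ν_i} μ(γ_n(ν_i)) δ^{(n/γ_n(ν_i))}_{b,ν_i} − μ(γ_n(i)) δ^{(n/γ_n(i))}_{b,i})|
  ≤ 1 + 2^{P(d)+2}`. -/
theorem bound_difference (n : ℕ) (hodd : Odd n) (d : ℕ) (hd : d ∣ n)
    (hd1 : 1 < d) (hdn : d < n)
    (ν : Fin d → ℤ)
    (hperm : ∀ c : ℕ, c ∣ n → c ≠ 1 → ∃ σ : Equiv.Perm (Fin d), ∀ i : Fin d,
      ν (σ i) ≡ ((i : ℤ) + 1) [ZMOD ((n / c : ℕ) : ℕ)] ∨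
      ν (σ i) ≡ -((i : ℤ) + 1) [ZMOD ((n / c : ℕ) : ℕ)])
    (b : ℕ) (hb : b ∈ BBFinset n) :
    |∑ i : Fin d,
        ((if (n : ℤ) ∣ ν i then 2 else 1) *
            (ArithmeticFunction.moebius (gammaFn n (ν i)) : ℤ) *
            deltaSim (n / gammaFn n (ν i)) (b : ℤ) (ν i) -
          (ArithmeticFunction.moebius (gammaFn n ((i : ℤ) + 1)) : ℤ) *
            deltaSim (n / gammaFn n ((i : ℤ) + 1)) (b : ℤ) ((i : ℤ) + 1))| ≤
      1 + 2 ^ (d.primeFactors.card + 2) :=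
  bound_difference_general n hodd d hd hdn ν hperm b
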